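/- arXiv:1604.04564 — 3 statements merged into one kernel-verified Lean document; each statement's English description precedes it below -/
import Mathlib

section
/- Let 𝒪 be an order in a product of number fields K with normalization 𝒪̃, and let 𝔠 be a nonzero ideal of 𝒪̃ with 𝔠 ⊆ 𝒪. For every maximal ideal 𝔭 of 𝒪, the natural map 𝒪̃_𝔭^×/𝒪_𝔭^× → (𝒪̃_𝔭/𝔠_𝔭)^× / (𝒪_𝔭/𝔠_𝔭)^× induced by reduction modulo 𝔠_𝔭 is an isomorphism (bijective). -/
set_option maxHeartbeats 1000000
set_option synthInstance.maxHeartbeats 2000000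

noncomputable section

open NumberField Filter Topology

/-- The localization `𝒪̃_𝔭` of the normalization `𝒪̃ = integralClosure ℤ A` of an order `𝒪`
at the multiplicative set `𝒪 ∖ 𝔭`, for `𝔭` a maximal ideal of `𝒪`. -/
noncomputable def NormLoc {A : Type} [CommRing A] (O : Subalgebra ℤ A)
    (hle : O ≤ integralClosure ℤ A) (𝔭 : MaximalSpectrum ↥O) : Type :=
  Localization (Submonoid.map ((Subalgebra.inclusion hle).toRingHom :
    ↥O →+* ↥(integralClosure ℤ A)) 𝔭.asIdeal.primeCompl)

noncomputable instance NormLoc.instCommRing {A : Type} [CommRing A] (O : Subalgebra ℤ A)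
    (hle : O ≤ integralClosure ℤ A) (𝔭 : MaximalSpectrum ↥O) :
    CommRing (NormLoc O hle 𝔭) :=
  inferInstanceAs (CommRing (Localization (Submonoid.map
    ((Subalgebra.inclusion hle).toRingHom : ↥O →+* ↥(integralClosure ℤ A))
    𝔭.asIdeal.primeCompl)))

noncomputable instance NormLoc.instAlgebra {A : Type} [CommRing A] (O : Subalgebra ℤ A)
    (hle : O ≤ integralClosure ℤ A) (𝔭 : MaximalSpectrum ↥O) :
    Algebra ↥(integralClosure ℤ A) (NormLoc O hle 𝔭) :=
  inferInstanceAs (Algebra ↥(integralClosure ℤ A) (Localization (Submonoid.map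
    ((Subalgebra.inclusion hle).toRingHom : ↥O →+* ↥(integralClosure ℤ A))
    𝔭.asIdeal.primeCompl)))

noncomputable instance NormLoc.instIsLocalization {A : Type} [CommRing A] (O : Subalgebra ℤ A)
    (hle : O ≤ integralClosure ℤ A) (𝔭 : MaximalSpectrum ↥O) :
    IsLocalization (Submonoid.map ((Subalgebra.inclusion hle).toRingHom :
      ↥O →+* ↥(integralClosure ℤ A)) 𝔭.asIdeal.primeCompl) (NormLoc O hle 𝔭) :=
  inferInstanceAs (IsLocalization (Submonoid.map
    ((Subalgebra.inclusion hle).toRingHom : ↥O →+* ↥(integralClosure ℤ A))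
    𝔭.asIdeal.primeCompl) (Localization (Submonoid.map
    ((Subalgebra.inclusion hle).toRingHom : ↥O →+* ↥(integralClosure ℤ A))
    𝔭.asIdeal.primeCompl)))

/-- The natural map `𝒪_𝔭 → 𝒪̃_𝔭`. -/
noncomputable def normLocMap {A : Type} [CommRing A] (O : Subalgebra ℤ A)
    (hle : O ≤ integralClosure ℤ A) (𝔭 : MaximalSpectrum ↥O) :
    Localization.AtPrime 𝔭.asIdeal →+* NormLoc O hle 𝔭 :=
  IsLocalization.map (NormLoc O hle 𝔭) ((Subalgebra.inclusion hle).toRingHom :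
      ↥O →+* ↥(integralClosure ℤ A))
    (Submonoid.le_comap_map 𝔭.asIdeal.primeCompl)

/-- The group `𝒪̃_𝔭ˣ/𝒪_𝔭ˣ`. -/
noncomputable abbrev localUnitsQuot {A : Type} [CommRing A] (O : Subalgebra ℤ A)
    (hle : O ≤ integralClosure ℤ A) (𝔭 : MaximalSpectrum ↥O) : Type :=
  (NormLoc O hle 𝔭)ˣ ⧸ (Units.map (normLocMap O hle 𝔭).toMonoidHom).range

/-- For an ideal `𝔠` of `𝒪̃` contained in `𝒪`: the corresponding ideal `𝔠 ∩ 𝒪 = 𝔠` of `𝒪`. -/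
noncomputable abbrev condO {A : Type} [CommRing A] (O : Subalgebra ℤ A)
    (hle : O ≤ integralClosure ℤ A) (c : Ideal ↥(integralClosure ℤ A)) : Ideal ↥O :=
  Ideal.comap ((Subalgebra.inclusion hle).toRingHom : ↥O →+* ↥(integralClosure ℤ A)) c

/-- The ideal `𝔠_𝔭` of `𝒪_𝔭`. -/
noncomputable abbrev condOLoc {A : Type} [CommRing A] (O : Subalgebra ℤ A)
    (hle : O ≤ integralClosure ℤ A) (c : Ideal ↥(integralClosure ℤ A))
    (𝔭 : MaximalSpectrum ↥O) : Ideal (Localization.AtPrime 𝔭.asIdeal) :=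
  Ideal.map (algebraMap ↥O (Localization.AtPrime 𝔭.asIdeal)) (condO O hle c)

/-- The ideal `𝔠_𝔭` of `𝒪̃_𝔭`. -/
noncomputable abbrev condNormLoc {A : Type} [CommRing A] (O : Subalgebra ℤ A)
    (hle : O ≤ integralClosure ℤ A) (c : Ideal ↥(integralClosure ℤ A))
    (𝔭 : MaximalSpectrum ↥O) : Ideal (NormLoc O hle 𝔭) :=
  Ideal.map (algebraMap ↥(integralClosure ℤ A) (NormLoc O hle 𝔭)) c

/-- The natural map `𝒪_𝔭/𝔠_𝔭 → 𝒪̃_𝔭/𝔠_𝔭`. -/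
noncomputable def condQuotMap {A : Type} [CommRing A] (O : Subalgebra ℤ A)
    (hle : O ≤ integralClosure ℤ A) (c : Ideal ↥(integralClosure ℤ A))
    (𝔭 : MaximalSpectrum ↥O) :
    Localization.AtPrime 𝔭.asIdeal ⧸ condOLoc O hle c 𝔭 →+*
      NormLoc O hle 𝔭 ⧸ condNormLoc O hle c 𝔭 :=
  Ideal.quotientMap _ (normLocMap O hle 𝔭) (by
    rw [Ideal.map_le_iff_le_comap]
    intro x hx
    rw [Ideal.mem_comap, Ideal.mem_comap]
    show normLocMap O hle 𝔭 ((algebraMap ↥O (Localization.AtPrime 𝔭.asIdeal)) x) ∈ _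
    rw [normLocMap, IsLocalization.map_eq]
    exact Ideal.mem_map_of_mem _ (Ideal.mem_comap.mp hx))

/-- The map `(𝒪_𝔭/𝔠_𝔭)ˣ → (𝒪̃_𝔭/𝔠_𝔭)ˣ` on units induced by `𝒪_𝔭/𝔠_𝔭 → 𝒪̃_𝔭/𝔠_𝔭`. -/
noncomputable def condQuotUnitsMap {A : Type} [CommRing A] (O : Subalgebra ℤ A)
    (hle : O ≤ integralClosure ℤ A) (c : Ideal ↥(integralClosure ℤ A))
    (𝔭 : MaximalSpectrum ↥O) :
    (Localization.AtPrime 𝔭.asIdeal ⧸ condOLoc O hle c 𝔭)ˣ →*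
      (NormLoc O hle 𝔭 ⧸ condNormLoc O hle c 𝔭)ˣ :=
  Units.map (condQuotMap O hle c 𝔭).toMonoidHom

/-- The natural homomorphism `𝒪̃_𝔭ˣ/𝒪_𝔭ˣ → (𝒪̃_𝔭/𝔠_𝔭)ˣ/(𝒪_𝔭/𝔠_𝔭)ˣ` induced by reduction
modulo `𝔠_𝔭`. -/
noncomputable def condUnitsMap {A : Type} [CommRing A] (O : Subalgebra ℤ A)
    (hle : O ≤ integralClosure ℤ A) (c : Ideal ↥(integralClosure ℤ A))
    (𝔭 : MaximalSpectrum ↥O) :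
    localUnitsQuot O hle 𝔭 →*
      ((NormLoc O hle 𝔭 ⧸ condNormLoc O hle c 𝔭)ˣ ⧸ (condQuotUnitsMap O hle c 𝔭).range) :=
  QuotientGroup.map _ _
    (Units.map (Ideal.Quotient.mk (condNormLoc O hle c 𝔭)).toMonoidHom)
    (by
      intro x hx
      obtain ⟨w, rfl⟩ := MonoidHom.mem_range.mp hx
      rw [Subgroup.mem_comap]
      refine MonoidHom.mem_range.mpr
        ⟨Units.map (Ideal.Quotient.mk (condOLoc O hle c 𝔭)).toMonoidHom w, ?_⟩
      ext
      simp [condQuotUnitsMap, condQuotMap, Ideal.quotientMap_mk])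


section Aux

theorem my_isUnit_of_isUnit_mk {R : Type*} [CommRing R] {I : Ideal R}
    (hI : I ≤ Ideal.jacobson ⊥) {x : R} (h : IsUnit (Ideal.Quotient.mk I x)) : IsUnit x := by
  obtain ⟨u, hu⟩ := h
  obtain ⟨y, hy⟩ := Ideal.Quotient.mk_surjective ((u⁻¹ : _) : R ⧸ I)
  have h1 : Ideal.Quotient.mk I (x * y) = Ideal.Quotient.mk I 1 := by
    rw [map_mul, ← hu, hy, map_one, Units.mul_inv]
  have h2 : x * y - 1 ∈ I := Ideal.Quotient.eq.mp h1
  exact isUnit_of_mul_isUnit_left (Ideal.isUnit_of_sub_one_mem_jacobson_bot _ (hI h2))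

theorem my_isUnit_add {R : Type*} [CommRing R] [IsLocalRing R] {x e : R}
    (hx : IsUnit x) (he : e ∈ IsLocalRing.maximalIdeal R) : IsUnit (x + e) := by
  by_contra hcon
  have h1 : x + e ∈ IsLocalRing.maximalIdeal R := (IsLocalRing.mem_maximalIdeal _).mpr hcon
  have h2 : x ∈ IsLocalRing.maximalIdeal R := by
    have := Ideal.sub_mem _ h1 he
    simpa using this
  exact ((IsLocalRing.mem_maximalIdeal _).mp h2) hx

variable {A : Type} [CommRing A] (O : Subalgebra ℤ A) (hle : O ≤ integralClosure ℤ A)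

theorem normLocMap_comp (𝔭 : MaximalSpectrum ↥O) :
    (normLocMap O hle 𝔭).comp (algebraMap ↥O (Localization.AtPrime 𝔭.asIdeal)) =
      (algebraMap ↥(integralClosure ℤ A) (NormLoc O hle 𝔭)).comp
        ((Subalgebra.inclusion hle).toRingHom) :=
  IsLocalization.map_comp _

theorem map_inclusion_condO (c : Ideal ↥(integralClosure ℤ A))
    (hcO : ∀ x : ↥(integralClosure ℤ A), x ∈ c → (x : A) ∈ O) :
    Ideal.map ((Subalgebra.inclusion hle).toRingHom) (condO O hle c) = c := by
  refine le_antisymm (Ideal.map_le_iff_le_comap.mpr le_rfl) fun x hx => ?_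
  have hx' : ((Subalgebra.inclusion hle).toRingHom) ⟨(x : A), hcO x hx⟩ = x := Subtype.ext rfl
  have hmem : (⟨(x : A), hcO x hx⟩ : ↥O) ∈ condO O hle c := by
    rw [Ideal.mem_comap, hx']; exact hx
  exact hx' ▸ Ideal.mem_map_of_mem _ hmem

theorem map_condOLoc (c : Ideal ↥(integralClosure ℤ A))
    (hcO : ∀ x : ↥(integralClosure ℤ A), x ∈ c → (x : A) ∈ O) (𝔭 : MaximalSpectrum ↥O) :
    Ideal.map (normLocMap O hle 𝔭) (condOLoc O hle c 𝔭) = condNormLoc O hle c 𝔭 := by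
  rw [condOLoc, Ideal.map_map, normLocMap_comp O hle 𝔭, ← Ideal.map_map,
    map_inclusion_condO O hle c hcO]

theorem incl_isIntegral : ((Subalgebra.inclusion hle).toRingHom :
    ↥O →+* ↥(integralClosure ℤ A)).IsIntegral := by
  intro x
  obtain ⟨p, pm, hp⟩ := integralClosure.isIntegral (R := ℤ) (A := A) x
  refine ⟨p.map (algebraMap ℤ ↥O), pm.map _, ?_⟩
  rw [Polynomial.eval₂_map]
  rw [show ((Subalgebra.inclusion hle).toRingHom).comp (algebraMap ℤ ↥O)
      = algebraMap ℤ ↥(integralClosure ℤ A) from RingHom.ext_int _ _]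
  exact hp

theorem normLocMap_isIntegral (𝔭 : MaximalSpectrum ↥O) :
    (normLocMap O hle 𝔭).IsIntegral :=
  isIntegral_localization' (incl_isIntegral O hle) 𝔭.asIdeal.primeCompl

theorem condOLoc_le_max (c : Ideal ↥(integralClosure ℤ A)) (𝔭 : MaximalSpectrum ↥O)
    (h : condO O hle c ≤ 𝔭.asIdeal) :
    condOLoc O hle c 𝔭 ≤ IsLocalRing.maximalIdeal (Localization.AtPrime 𝔭.asIdeal) := by
  calc condOLoc O hle c 𝔭
      ≤ Ideal.map (algebraMap ↥O (Localization.AtPrime 𝔭.asIdeal)) 𝔭.asIdeal :=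
        Ideal.map_mono h
    _ = _ := Localization.AtPrime.map_eq_maximalIdeal

theorem condNormLoc_le_jacobson (c : Ideal ↥(integralClosure ℤ A))
    (hcO : ∀ x : ↥(integralClosure ℤ A), x ∈ c → (x : A) ∈ O) (𝔭 : MaximalSpectrum ↥O)
    (h : condO O hle c ≤ 𝔭.asIdeal) :
    condNormLoc O hle c 𝔭 ≤ Ideal.jacobson ⊥ := by
  rw [← map_condOLoc O hle c hcO 𝔭]
  unfold Ideal.jacobson
  refine le_sInf fun J hJ => ?_
  obtain ⟨-, hJm⟩ := hJ
  haveI := hJm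
  rw [Ideal.map_le_iff_le_comap]
  have hmax : (J.comap (normLocMap O hle 𝔭)).IsMaximal :=
    Ideal.isMaximal_comap_of_isIntegral_of_isMaximal' _ (normLocMap_isIntegral O hle 𝔭) J
  rw [IsLocalRing.eq_maximalIdeal hmax]
  exact condOLoc_le_max O hle c 𝔭 h

theorem exists_of_mem_condNormLoc (c : Ideal ↥(integralClosure ℤ A))
    (hcO : ∀ x : ↥(integralClosure ℤ A), x ∈ c → (x : A) ∈ O) (𝔭 : MaximalSpectrum ↥O)
    {d : NormLoc O hle 𝔭} (hd : d ∈ condNormLoc O hle c 𝔭) :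
    ∃ e ∈ condOLoc O hle c 𝔭, normLocMap O hle 𝔭 e = d := by
  obtain ⟨⟨a, t⟩, hat⟩ := (IsLocalization.mem_map_algebraMap_iff
    (Submonoid.map ((Subalgebra.inclusion hle).toRingHom) 𝔭.asIdeal.primeCompl)
    (NormLoc O hle 𝔭)).mp hd
  obtain ⟨t₀, ht₀, htt⟩ := t.2
  have ha : ((a : ↥(integralClosure ℤ A)) : A) ∈ O := hcO a a.2
  have ha₀mem : (⟨_, ha⟩ : ↥O) ∈ condO O hle c := by
    rw [Ideal.mem_comap]
    exact a.2
  refine ⟨IsLocalization.mk' (Localization.AtPrime 𝔭.asIdeal) (⟨_, ha⟩ : ↥O) ⟨t₀, ht₀⟩, ?_, ?_⟩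
  · rw [IsLocalization.mk'_eq_mul_mk'_one]
    exact Ideal.mul_mem_right _ _ (Ideal.mem_map_of_mem _ ha₀mem)
  · rw [normLocMap, IsLocalization.map_mk']
    rw [show ((Subalgebra.inclusion hle).toRingHom (⟨_, ha⟩ : ↥O)
      = (a : ↥(integralClosure ℤ A))) from Subtype.ext rfl]
    refine (IsLocalization.eq_mk'_iff_mul_eq.mpr ?_).symm
    show d * algebraMap _ _ ((Subalgebra.inclusion hle).toRingHom t₀) = _
    rw [htt]
    exact hat

end Aux


theorem bij_of_le {A : Type} [CommRing A] (O : Subalgebra ℤ A)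
    (hle : O ≤ integralClosure ℤ A) (c : Ideal ↥(integralClosure ℤ A))
    (hcO : ∀ x : ↥(integralClosure ℤ A), x ∈ c → (x : A) ∈ O) (𝔭 : MaximalSpectrum ↥O)
    (h : condO O hle c ≤ 𝔭.asIdeal) :
    Function.Bijective (condUnitsMap O hle c 𝔭) := by
  constructor
  · rw [injective_iff_map_eq_one]
    intro a ha
    obtain ⟨u, rfl⟩ := QuotientGroup.mk_surjective a
    rw [condUnitsMap, QuotientGroup.map_mk, QuotientGroup.eq_one_iff] at ha
    rw [QuotientGroup.eq_one_iff]
    obtain ⟨v, hv⟩ := ha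
    obtain ⟨x, hx⟩ := Ideal.Quotient.mk_surjective
      ((v : _) : Localization.AtPrime 𝔭.asIdeal ⧸ condOLoc O hle c 𝔭)
    have hxu : IsUnit x := my_isUnit_of_isUnit_mk
      ((condOLoc_le_max O hle c 𝔭 h).trans (IsLocalRing.maximalIdeal_le_jacobson ⊥))
      (by rw [hx]; exact v.isUnit)
    have hval : Ideal.Quotient.mk (condNormLoc O hle c 𝔭) (normLocMap O hle 𝔭 x)
        = Ideal.Quotient.mk _ ((u : (NormLoc O hle 𝔭)ˣ) : NormLoc O hle 𝔭) := by
      have h2 := congrArg Units.val hv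
      simp only [condQuotUnitsMap, Units.coe_map, RingHom.toMonoidHom_eq_coe,
        MonoidHom.coe_coe] at h2
      rw [← hx, condQuotMap, Ideal.quotientMap_mk] at h2
      exact h2
    have hd : ((u : (NormLoc O hle 𝔭)ˣ) : NormLoc O hle 𝔭) - normLocMap O hle 𝔭 x
        ∈ condNormLoc O hle c 𝔭 := Ideal.Quotient.eq.mp hval.symm
    obtain ⟨e, he, hfe⟩ := exists_of_mem_condNormLoc O hle c hcO 𝔭 hd
    have hxe : IsUnit (x + e) := my_isUnit_add hxu (condOLoc_le_max O hle c 𝔭 h he)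
    obtain ⟨w, hw⟩ := hxe
    refine MonoidHom.mem_range.mpr ⟨w, Units.ext ?_⟩
    show normLocMap O hle 𝔭 ((w : _)) = ((u : (NormLoc O hle 𝔭)ˣ) : NormLoc O hle 𝔭)
    rw [hw, map_add, hfe]
    ring
  · intro y
    obtain ⟨U, rfl⟩ := QuotientGroup.mk_surjective y
    obtain ⟨x, hx⟩ := Ideal.Quotient.mk_surjective
      ((U : _) : NormLoc O hle 𝔭 ⧸ condNormLoc O hle c 𝔭)
    have hxu : IsUnit x := my_isUnit_of_isUnit_mk (condNormLoc_le_jacobson O hle c hcO 𝔭 h)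
      (by rw [hx]; exact U.isUnit)
    obtain ⟨u, hu⟩ := hxu
    refine ⟨QuotientGroup.mk u, ?_⟩
    rw [condUnitsMap, QuotientGroup.map_mk]
    refine congrArg _ (Units.ext ?_)
    show Ideal.Quotient.mk _ ((u : NormLoc O hle 𝔭)) = _
    rw [hu, hx]

theorem bij_of_not_le {A : Type} [CommRing A] (O : Subalgebra ℤ A)
    (hle : O ≤ integralClosure ℤ A) (c : Ideal ↥(integralClosure ℤ A))
    (hcO : ∀ x : ↥(integralClosure ℤ A), x ∈ c → (x : A) ∈ O) (𝔭 : MaximalSpectrum ↥O)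
    (h : ¬ condO O hle c ≤ 𝔭.asIdeal) :
    Function.Bijective (condUnitsMap O hle c 𝔭) := by
  obtain ⟨t, htc, htp⟩ := SetLike.not_le_iff_exists.mp h
  have htc' : (Subalgebra.inclusion hle).toRingHom t ∈ c := htc
  have hfinj : Function.Injective (normLocMap O hle 𝔭) :=
    IsLocalization.map_injective_of_injective _ _ _ (Subalgebra.inclusion_injective hle)
  have hfsurj : Function.Surjective (normLocMap O hle 𝔭) := by
    intro y
    obtain ⟨⟨z, s⟩, hz⟩ := IsLocalization.surj
      (Submonoid.map ((Subalgebra.inclusion hle).toRingHom) 𝔭.asIdeal.primeCompl) y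
    obtain ⟨s₀, hs₀, hss⟩ := s.2
    have hmem : (Subalgebra.inclusion hle).toRingHom t * z ∈ c := Ideal.mul_mem_right _ _ htc'
    have hy : y = IsLocalization.mk' (NormLoc O hle 𝔭) z s :=
      IsLocalization.eq_mk'_iff_mul_eq.mpr hz
    refine ⟨IsLocalization.mk' (Localization.AtPrime 𝔭.asIdeal)
      (⟨(((Subalgebra.inclusion hle).toRingHom t * z : ↥(integralClosure ℤ (A))) :
        A), hcO _ hmem⟩ : ↥O)
      (⟨t, htp⟩ * ⟨s₀, hs₀⟩ : 𝔭.asIdeal.primeCompl), ?_⟩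
    rw [normLocMap, IsLocalization.map_mk', hy]
    refine IsLocalization.mk'_eq_of_eq' ?_
    show z * ((Subalgebra.inclusion hle).toRingHom (t * s₀)) = _ * (s : _)
    rw [map_mul,
      show ((Subalgebra.inclusion hle).toRingHom
        (⟨(((Subalgebra.inclusion hle).toRingHom t * z : ↥(integralClosure ℤ (A))) :
          A), hcO _ hmem⟩ : ↥O)) = (Subalgebra.inclusion hle).toRingHom t * z from
        Subtype.ext rfl, ← hss]
    ring
  have hrange : ∀ u : (NormLoc O hle 𝔭)ˣ,
      u ∈ (Units.map (normLocMap O hle 𝔭).toMonoidHom).range := by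
    intro u
    obtain ⟨x, hxv⟩ := hfsurj ((u : (NormLoc O hle 𝔭)ˣ) : NormLoc O hle 𝔭)
    obtain ⟨x', hx'⟩ := hfsurj ((u⁻¹ : (NormLoc O hle 𝔭)ˣ) : NormLoc O hle 𝔭)
    have hxx : x * x' = 1 := hfinj (by rw [map_mul, hxv, hx', map_one, Units.mul_inv])
    refine MonoidHom.mem_range.mpr ⟨(IsUnit.of_mul_eq_one (a := x) x' hxx).unit, Units.ext ?_⟩
    show normLocMap O hle 𝔭 (((IsUnit.of_mul_eq_one (a := x) x' hxx).unit : _)) = _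
    rw [IsUnit.unit_spec]
    exact hxv
  have hdom : ∀ a : localUnitsQuot O hle 𝔭, a = 1 := by
    intro a
    obtain ⟨u, rfl⟩ := QuotientGroup.mk_surjective a
    exact (QuotientGroup.eq_one_iff u).mpr (hrange u)
  have htop : condNormLoc O hle c 𝔭 = ⊤ := by
    refine Ideal.eq_top_of_isUnit_mem _ (Ideal.mem_map_of_mem _ htc') ?_
    exact IsLocalization.map_units
      (M := Submonoid.map ((Subalgebra.inclusion hle).toRingHom) 𝔭.asIdeal.primeCompl)
      (NormLoc O hle 𝔭)
      ⟨(Subalgebra.inclusion hle).toRingHom t, Submonoid.mem_map.mpr ⟨t, htp, rfl⟩⟩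
  haveI : Subsingleton (NormLoc O hle 𝔭 ⧸ condNormLoc O hle c 𝔭) :=
    Ideal.Quotient.subsingleton_iff.mpr htop
  constructor
  · intro a b _
    rw [hdom a, hdom b]
  · intro y
    refine ⟨1, ?_⟩
    obtain ⟨U, rfl⟩ := QuotientGroup.mk_surjective y
    rw [map_one, show U = 1 from Subsingleton.elim _ _]
    rfl

/-- Reduction modulo `𝔠_𝔭` induces an isomorphism
`𝒪̃_𝔭ˣ/𝒪_𝔭ˣ ≃ (𝒪̃_𝔭/𝔠_𝔭)ˣ/(𝒪_𝔭/𝔠_𝔭)ˣ`. -/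
theorem stmt9 {m : ℕ} (K : Fin m → Type) [∀ i, Field (K i)] [∀ i, NumberField (K i)]
    (O : Subalgebra ℤ (Π i, K i)) (hfg : Module.Finite ℤ ↥O)
    (hK : ∀ x : Π i, K i, ∃ n : ℕ, 0 < n ∧ n • x ∈ O)
    (hle : O ≤ integralClosure ℤ (Π i, K i))
    (c : Ideal ↥(integralClosure ℤ (Π i, K i))) (hc0 : c ≠ ⊥)
    (hcO : ∀ x : ↥(integralClosure ℤ (Π i, K i)), x ∈ c → (x : Π i, K i) ∈ O) :
    ∀ 𝔭 : MaximalSpectrum ↥O, Function.Bijective (condUnitsMap O hle c 𝔭) := by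
  intro 𝔭
  by_cases h : condO O hle c ≤ 𝔭.asIdeal
  · exact bij_of_le O hle c hcO 𝔭 h
  · exact bij_of_not_le O hle c hcO 𝔭 h

end
end

section
/- Let p be a prime and let 𝒪 := ℤ ×_{𝔽_p} ℤ = {(a,b) ∈ ℤ × ℤ : a ≡ b (mod p)}. Then for all real s > 1, ζ_𝒪(s) = (1 − p^{−s}) · ζ(s)², where ζ is the Riemann zeta function. -/
set_option maxHeartbeats 1000000
set_option synthInstance.maxHeartbeats 400000

noncomputable section

open NumberField Filter Topology

/-- The zeta function of a (finite-type) commutative ring, defined for real `s` as the Euler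
product `∏_𝔭 (1 - N𝔭^{-s})⁻¹` over all maximal ideals `𝔭`, where `N𝔭 = #(R/𝔭)`. -/
noncomputable def zetaOrder (R : Type) [CommRing R] (s : ℝ) : ℝ :=
  ∏' 𝔭 : MaximalSpectrum R, (1 - (Nat.card (R ⧸ 𝔭.asIdeal) : ℝ) ^ (-s))⁻¹

/-- The fiber product `ℤ ×_{𝔽_p} ℤ = {(a,b) ∈ ℤ × ℤ : a ≡ b (mod p)}`. -/
def zfp (p : ℕ) : Subring (ℤ × ℤ) :=
  RingHom.eqLocus ((Int.castRingHom (ZMod p)).comp (RingHom.fst ℤ ℤ))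
    ((Int.castRingHom (ZMod p)).comp (RingHom.snd ℤ ℤ))

namespace Stmt13Aux


variable (p : ℕ)

/-- the two coordinate projections -/
def pi (i : Bool) : ↥(zfp p) →+* ℤ :=
  (cond i (RingHom.snd ℤ ℤ) (RingHom.fst ℤ ℤ)).comp (zfp p).subtype

def phi (q : ℕ) (i : Bool) : ↥(zfp p) →+* ZMod q :=
  (Int.castRingHom (ZMod q)).comp (pi p i)

def dia (a : ℤ) : ↥(zfp p) := ⟨(a, a), rfl⟩

lemma pi_dia (i : Bool) (a : ℤ) : pi p i (dia p a) = a := by cases i <;> rfl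

lemma pi_surjective (i : Bool) : Function.Surjective (pi p i) :=
  fun a => ⟨dia p a, pi_dia p i a⟩

lemma phi_apply (q : ℕ) (i : Bool) (x : ↥(zfp p)) :
    phi p q i x = ((pi p i x : ℤ) : ZMod q) := rfl

lemma phi_surjective (q : ℕ) (i : Bool) : Function.Surjective (phi p q i) := by
  intro r
  obtain ⟨a, ha⟩ := ZMod.intCast_surjective (n := q) r
  exact ⟨dia p a, by rw [phi_apply, pi_dia]; exact ha⟩

def M (q : ℕ) (i : Bool) : Ideal ↥(zfp p) := RingHom.ker (phi p q i)

lemma mem_M (q : ℕ) (i : Bool) (x : ↥(zfp p)) :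
    x ∈ M p q i ↔ ((pi p i x : ℤ) : ZMod q) = 0 := RingHom.mem_ker

lemma M_isMaximal (q : ℕ) (hq : q.Prime) (i : Bool) : (M p q i).IsMaximal := by
  haveI := Fact.mk hq
  exact RingHom.ker_isMaximal_of_surjective _ (phi_surjective p q i)

lemma card_quot (q : ℕ) (i : Bool) :
    Nat.card (↥(zfp p) ⧸ M p q i) = q := by
  rw [show M p q i = RingHom.ker (phi p q i) from rfl]
  rw [Nat.card_congr (RingHom.quotientKerEquivOfSurjective (phi_surjective p q i)).toEquiv]
  exact Nat.card_zmod q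

lemma M_eq_prime (q q' : ℕ) (hq : q.Prime) (hq' : q'.Prime) (i i' : Bool)
    (h : M p q i = M p q' i') : q = q' := by
  have h1 : dia p (q : ℤ) ∈ M p q i := by
    rw [mem_M, pi_dia]
    simp
  rw [h, mem_M, pi_dia, ZMod.intCast_zmod_eq_zero_iff_dvd, Int.natCast_dvd_natCast] at h1
  exact ((Nat.prime_dvd_prime_iff_eq hq' hq).mp h1).symm

lemma M_false_ne_true (hp : p.Prime) (q : ℕ) (hq : q.Prime) (hne : q ≠ p) :
    M p q false ≠ M p q true := by
  haveI := Fact.mk hq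
  have hcop : IsCoprime (q : ℤ) (p : ℤ) := by
    rw [Int.isCoprime_iff_gcd_eq_one]
    simpa using (Nat.coprime_primes hq hp).mpr hne
  obtain ⟨u, v, huv⟩ := hcop
  have hmem : ((u * q : ℤ), (1 : ℤ)) ∈ zfp p := by
    show ((u * q : ℤ) : ZMod p) = ((1 : ℤ) : ZMod p)
    have : ((u * q : ℤ) : ZMod p) = ((u * q + v * p : ℤ) : ZMod p) := by
      push_cast [ZMod.natCast_self]
      ring
    rw [this, huv]
  set z : ↥(zfp p) := ⟨((u * q : ℤ), (1 : ℤ)), hmem⟩ with hz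
  intro hMM
  have hz1 : z ∈ M p q false := by
    rw [mem_M]
    show ((u * q : ℤ) : ZMod q) = 0
    push_cast [ZMod.natCast_self]
    ring
  rw [hMM, mem_M] at hz1
  have : ((1 : ℤ) : ZMod q) = 0 := hz1
  simp at this

lemma M_p_eq : M p p false = M p p true := by
  ext x
  rw [mem_M, mem_M]
  have hx : ((x.1.1 : ℤ) : ZMod p) = ((x.1.2 : ℤ) : ZMod p) := x.2
  show ((x.1.1 : ℤ) : ZMod p) = 0 ↔ ((x.1.2 : ℤ) : ZMod p) = 0
  rw [hx]

lemma classify_aux (m : Ideal ↥(zfp p)) (hm : m.IsMaximal) (i : Bool)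
    (hker : RingHom.ker (pi p i) ≤ m) : ∃ q : ℕ, q.Prime ∧ m = M p q i := by
  have hsurj := pi_surjective p i
  have hcomap : Ideal.comap (pi p i) (Ideal.map (pi p i) m) = m := by
    rw [Ideal.comap_map_of_surjective _ hsurj]
    rw [← RingHom.ker_eq_comap_bot]
    exact sup_eq_left.mpr hker
  rcases Ideal.map_eq_top_or_isMaximal_of_surjective _ hsurj hm with htop | hmax
  · exfalso
    rw [htop, Ideal.comap_top] at hcomap
    exact hm.ne_top hcomap.symm
  · obtain ⟨g, hg⟩ := (IsPrincipalIdealRing.principal (Ideal.map (pi p i) m)).principal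
    have hg' : Ideal.map (pi p i) m = Ideal.span {g} := hg
    have hg0 : g ≠ 0 := by
      rintro rfl
      have hb : Ideal.map (pi p i) m = ⊥ := by
        rw [hg']; exact Ideal.span_singleton_eq_bot.mpr rfl
      rw [hb] at hmax
      have h2ne : (Ideal.span {(2 : ℤ)}) ≠ ⊤ := by
        rw [Ne, Ideal.span_singleton_eq_top, Int.isUnit_iff]
        omega
      have h2 := hmax.eq_of_le h2ne bot_le
      rw [eq_comm, Ideal.span_singleton_eq_bot] at h2
      omega
    have hgPrime : Prime g := by
      rw [← Ideal.span_singleton_prime hg0, ← hg']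
      exact hmax.isPrime
    refine ⟨g.natAbs, Int.prime_iff_natAbs_prime.mp hgPrime, ?_⟩
    have hspan : Ideal.map (pi p i) m = Ideal.span {(g.natAbs : ℤ)} := by
      rw [hg']
      exact Ideal.span_singleton_eq_span_singleton.mpr (Int.associated_natAbs g)
    have hMc : M p g.natAbs i = Ideal.comap (pi p i) (Ideal.span {(g.natAbs : ℤ)}) := by
      rw [show M p g.natAbs i = RingHom.ker (phi p g.natAbs i) from rfl, phi,
        ← RingHom.comap_ker, ZMod.ker_intCastRingHom]
    rw [hMc, ← hspan, hcomap]

lemma classify (m : Ideal ↥(zfp p)) (hm : m.IsMaximal) :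
    ∃ q : ℕ, q.Prime ∧ ∃ i : Bool, m = M p q i := by
  have hXmem : (((p : ℤ), (0 : ℤ)) : ℤ × ℤ) ∈ zfp p := by
    show ((p : ℤ) : ZMod p) = ((0 : ℤ) : ZMod p)
    simp
  have hYmem : (((0 : ℤ), (p : ℤ)) : ℤ × ℤ) ∈ zfp p := by
    show ((0 : ℤ) : ZMod p) = ((p : ℤ) : ZMod p)
    simp
  set X : ↥(zfp p) := ⟨((p : ℤ), 0), hXmem⟩ with hX
  set Y : ↥(zfp p) := ⟨(0, (p : ℤ)), hYmem⟩ with hY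
  have hXY : X * Y = 0 := by
    apply Subtype.ext
    show (((p : ℤ), (0:ℤ)) : ℤ × ℤ) * ((0 : ℤ), (p : ℤ)) = 0
    simp [Prod.ext_iff]
  have hmem : X * Y ∈ m := by rw [hXY]; exact m.zero_mem
  rcases hm.isPrime.mem_or_mem hmem with hXm | hYm
  · -- X = (p,0) ∈ m ; m = M q true
    have hker : RingHom.ker (pi p true) ≤ m := by
      intro x hx
      have hx2 : x.1.2 = 0 := hx
      have hx1 : ((x.1.1 : ℤ) : ZMod p) = 0 := by
        have := x.2
        rw [show ((x.1.1 : ℤ) : ZMod p) = ((x.1.2 : ℤ) : ZMod p) from this, hx2]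
        simp
      obtain ⟨b, hb⟩ := (ZMod.intCast_zmod_eq_zero_iff_dvd _ _).mp hx1
      have hxe : x = X * dia p b := by
        apply Subtype.ext
        show x.1 = (((p : ℤ), (0:ℤ)) : ℤ × ℤ) * (b, b)
        rw [Prod.ext_iff]
        constructor
        · show x.1.1 = (p : ℤ) * b; rw [hb]
        · show x.1.2 = 0 * b; rw [hx2, zero_mul]
      rw [hxe]
      exact Ideal.mul_mem_right _ _ hXm
    obtain ⟨q, hq, hqm⟩ := classify_aux p m hm true hker
    exact ⟨q, hq, true, hqm⟩
  · have hker : RingHom.ker (pi p false) ≤ m := by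
      intro x hx
      have hx1 : x.1.1 = 0 := hx
      have hx2 : ((x.1.2 : ℤ) : ZMod p) = 0 := by
        have : ((x.1.1 : ℤ) : ZMod p) = ((x.1.2 : ℤ) : ZMod p) := x.2
        rw [hx1] at this
        simpa using this.symm
      obtain ⟨b, hb⟩ := (ZMod.intCast_zmod_eq_zero_iff_dvd _ _).mp hx2
      have hxe : x = Y * dia p b := by
        apply Subtype.ext
        show x.1 = (((0:ℤ), (p : ℤ)) : ℤ × ℤ) * (b, b)
        rw [Prod.ext_iff]
        constructor
        · show x.1.1 = 0 * b; rw [hx1, zero_mul]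
        · show x.1.2 = (p : ℤ) * b; rw [hb]
      rw [hxe]
      exact Ideal.mul_mem_right _ _ hYm
    obtain ⟨q, hq, hqm⟩ := classify_aux p m hm false hker
    exact ⟨q, hq, false, hqm⟩



def F1 (s : ℝ) (hs : 1 < s) : ℕ →*₀ ℝ where
  toFun n := (n : ℝ) ^ (-s)
  map_zero' := by
    show ((0:ℕ) : ℝ) ^ (-s) = 0
    rw [Nat.cast_zero]
    exact Real.zero_rpow (by linarith)
  map_one' := by simp
  map_mul' m n := by
    push_cast
    exact Real.mul_rpow (Nat.cast_nonneg m) (Nat.cast_nonneg n)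

def F2 (p : ℕ) (hp : p.Prime) (s : ℝ) (hs : 1 < s) : ℕ →*₀ ℝ where
  toFun n := if p ∣ n then 0 else (n : ℝ) ^ (-s)
  map_zero' := by simp
  map_one' := by
    show (if p ∣ 1 then (0:ℝ) else ((1:ℕ) : ℝ) ^ (-s)) = 1
    rw [if_neg hp.not_dvd_one, Nat.cast_one, Real.one_rpow]
  map_mul' m n := by
    by_cases hm : p ∣ m
    · simp [hm, dvd_mul_of_dvd_left hm]
    · by_cases hn : p ∣ n
      · simp [hn, dvd_mul_of_dvd_right hn]
      · have hmn : ¬ p ∣ m * n := by rw [hp.dvd_mul]; tauto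
        simp only [if_neg hmn, if_neg hm, if_neg hn]
        push_cast
        exact Real.mul_rpow (Nat.cast_nonneg m) (Nat.cast_nonneg n)

end Stmt13Aux

open Stmt13Aux in
/-- For `𝒪 = ℤ ×_{𝔽_p} ℤ` and real `s > 1`, `ζ_𝒪(s) = (1 - p^{-s}) ζ(s)²` where `ζ` is the
Riemann zeta function. -/
theorem stmt13 (p : ℕ) (hp : p.Prime) (s : ℝ) (hs : 1 < s) :
    (zetaOrder ↥(zfp p) s : ℂ) = (1 - (p : ℂ) ^ (-(s : ℂ))) * riemannZeta s ^ 2 := by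
  classical
  have hs0 : -s < 0 := by linarith
  set c : Nat.Primes → ℝ := fun q => (1 - ((q : ℕ) : ℝ) ^ (-s))⁻¹ with hc
  -- Real Euler product over all primes
  have hsum1 : Summable (fun n => ‖F1 s hs n‖) := by
    have h := Real.summable_nat_rpow.mpr (show -s < -1 by linarith)
    refine h.congr fun n => ?_
    rw [Real.norm_eq_abs]
    exact (abs_of_nonneg (Real.rpow_nonneg (Nat.cast_nonneg n) (-s)) :
      |(n:ℝ) ^ (-s)| = _).symm
  have hA := EulerProduct.eulerProduct_completely_multiplicative_hasProd (f := F1 s hs) hsum1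
  set A := ∑' n, F1 s hs n with hAdef
  have hAc : HasProd c A := by
    have heq : (fun q : Nat.Primes => (1 - F1 s hs ↑q)⁻¹) = c := by
      funext q; simp [hc, F1]
    rwa [heq] at hA
  set phat : Nat.Primes := ⟨p, hp⟩ with hphat
  -- Real Euler product over primes different from p
  have hsum2 : Summable (fun n => ‖F2 p hp s hs n‖) := by
    refine Summable.of_nonneg_of_le (fun n => norm_nonneg _) (fun n => ?_) hsum1
    rw [show (F2 p hp s hs n) = (if p ∣ n then (0:ℝ) else (n:ℝ) ^ (-s)) from rfl,
      show (F1 s hs n) = ((n:ℝ) ^ (-s)) from rfl]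
    split
    · simpa using Real.rpow_nonneg (Nat.cast_nonneg n) (-s)
    · exact le_refl _
  have hB0 := EulerProduct.eulerProduct_completely_multiplicative_hasProd (f := F2 p hp s hs) hsum2
  set B := ∑' n, F2 p hp s hs n with hBdef
  have hsupp : Function.mulSupport (fun q : Nat.Primes => (1 - F2 p hp s hs ↑q)⁻¹) ⊆
      ({phat}ᶜ : Set Nat.Primes) := by
    intro q hq
    simp only [Set.mem_compl_iff, Set.mem_singleton_iff]
    rintro rfl
    apply hq
    simp [F2, show ((phat : ℕ)) = p from rfl]
  have hBsub := (hasProd_subtype_iff_of_mulSupport_subset hsupp).mpr hB0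
  have hBc : HasProd ((c ∘ (↑)) : ↥({phat}ᶜ : Set Nat.Primes) → ℝ) B := by
    have heq : ((fun q : Nat.Primes => (1 - F2 p hp s hs ↑q)⁻¹) ∘
        ((↑) : ↥({phat}ᶜ : Set Nat.Primes) → Nat.Primes)) = (c ∘ (↑)) := by
      funext q
      have hnd : ¬ p ∣ ((q.1 : ℕ)) := by
        intro hd
        exact q.2 (Set.mem_singleton_iff.mpr
          (Subtype.ext ((Nat.prime_dvd_prime_iff_eq hp q.1.2).mp hd).symm))
      simp [F2, hnd, hc]
    rwa [heq] at hBsub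
  have hsing : HasProd ((c ∘ (↑)) : ↥({phat} : Set Nat.Primes) → ℝ) (c phat) := by
    have h := hasProd_fintype ((c ∘ (↑)) : ↥({phat} : Set Nat.Primes) → ℝ)
    simpa using h
  have hAc2 : HasProd c (c phat * B) := hsing.mul_compl hBc
  have hAB : A = c phat * B := hAc.unique hAc2
  -- index set for the maximal spectrum
  set Jset : Set (Nat.Primes × Bool) := {(phat, true)}ᶜ with hJset
  set E : ↥Jset → MaximalSpectrum ↥(zfp p) :=
    fun x => ⟨M p (x.1.1 : ℕ) x.1.2, M_isMaximal p _ x.1.1.2 _⟩ with hE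
  have hinj : Function.Injective E := by
    rintro ⟨⟨q, i⟩, hxJ⟩ ⟨⟨q', i'⟩, hyJ⟩ h
    have hid : M p (q:ℕ) i = M p (q':ℕ) i' := congrArg MaximalSpectrum.asIdeal h
    have hqq : (q:ℕ) = (q':ℕ) := M_eq_prime p _ _ q.2 q'.2 _ _ hid
    have hq2 : q = q' := Subtype.ext hqq
    subst hq2
    have hx' : ((q, i) : Nat.Primes × Bool) ≠ (phat, true) := hxJ
    have hy' : ((q, i') : Nat.Primes × Bool) ≠ (phat, true) := hyJ
    have hii : i = i' := by
      by_cases hqp : (q:ℕ) = p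
      · have hqphat : q = phat := Subtype.ext hqp
        subst hqphat
        cases i <;> cases i' <;> simp_all
      · cases i <;> cases i'
        · rfl
        · exact absurd hid (M_false_ne_true p hp (q:ℕ) q.2 hqp)
        · exact absurd hid.symm (M_false_ne_true p hp (q:ℕ) q.2 hqp)
        · rfl
    subst hii
    rfl
  have hsurj : Function.Surjective E := by
    intro 𝔭
    obtain ⟨q, hq, i, hqi⟩ := classify p 𝔭.asIdeal 𝔭.isMaximal
    by_cases hcase : q = p ∧ i = true
    · refine ⟨⟨(phat, false), by simp [hJset]⟩, ?_⟩
      apply MaximalSpectrum.ext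
      show M p ((phat : ℕ)) false = 𝔭.asIdeal
      rw [hcase.1, hcase.2] at hqi
      rw [show ((phat : ℕ)) = p from rfl, M_p_eq p]
      exact hqi.symm
    · refine ⟨⟨(⟨q, hq⟩, i), ?_⟩, ?_⟩
      · simp only [hJset, Set.mem_compl_iff, Set.mem_singleton_iff]
        intro heq
        rw [Prod.ext_iff] at heq
        exact hcase ⟨congrArg Subtype.val heq.1, heq.2⟩
      · apply MaximalSpectrum.ext
        exact hqi.symm
  -- the product over Jset
  set Sf : Set ↥Jset := {x | x.1.2 = false} with hSf
  let e1 : Nat.Primes ≃ ↥Sf :=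
    { toFun := fun q => ⟨⟨(q, false), by simp [hJset]⟩, rfl⟩
      invFun := fun x => x.1.1.1
      left_inv := fun q => rfl
      right_inv := fun x => by
        apply Subtype.ext; apply Subtype.ext
        exact Prod.ext rfl x.2.symm }
  have hS : HasProd (((fun x : ↥Jset => c x.1.1) ∘ (↑)) : ↥Sf → ℝ) A :=
    e1.hasProd_iff.mp hAc
  let e2 : ↥({phat}ᶜ : Set Nat.Primes) ≃ ↥(Sfᶜ) :=
    { toFun := fun q => ⟨⟨(q.1, true), by
        simp only [hJset, Set.mem_compl_iff, Set.mem_singleton_iff]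
        intro h
        exact q.2 (Set.mem_singleton_iff.mpr (Prod.ext_iff.mp h).1)⟩, by
        intro hmem
        exact Bool.true_eq_false.mp hmem⟩
      invFun := fun x => ⟨x.1.1.1, by
        intro h
        have h1 : x.1.1.1 = phat := Set.mem_singleton_iff.mp h
        have h2 : x.1.1.2 = true := by
          have hx2 := x.2
          simp only [hSf, Set.mem_compl_iff, Set.mem_setOf_eq] at hx2
          exact Bool.not_eq_false _ |>.mp hx2
        exact x.1.2 (Prod.ext h1 h2)⟩
      left_inv := fun q => Subtype.ext rfl
      right_inv := fun x => by
        apply Subtype.ext; apply Subtype.ext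
        refine Prod.ext rfl ?_
        have hx2 := x.2
        simp only [hSf, Set.mem_compl_iff, Set.mem_setOf_eq] at hx2
        exact (Bool.not_eq_false _ |>.mp hx2).symm }
  have hT : HasProd (((fun x : ↥Jset => c x.1.1) ∘ (↑)) : ↥(Sfᶜ) → ℝ) B :=
    e2.hasProd_iff.mp hBc
  have hJ : HasProd (fun x : ↥Jset => c x.1.1) (A * B) := hS.mul_compl hT
  -- compute zetaOrder
  have hzeta : zetaOrder ↥(zfp p) s = A * B := by
    rw [zetaOrder, ← (Equiv.ofBijective E ⟨hinj, hsurj⟩).tprod_eq]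
    refine Eq.trans (tprod_congr (fun x : ↥Jset => ?_)) hJ.tprod_eq
    show (1 - (Nat.card (↥(zfp p) ⧸ (E x).asIdeal) : ℝ) ^ (-s))⁻¹ = c x.1.1
    rw [show (E x).asIdeal = M p (x.1.1 : ℕ) x.1.2 from rfl, card_quot p _ _]
  -- final arithmetic
  have hplt : ((p : ℕ) : ℝ) ^ (-s) < 1 :=
    Real.rpow_lt_one_of_one_lt_of_neg (by exact_mod_cast hp.one_lt) hs0
  have h1t : (0:ℝ) < 1 - ((p:ℕ):ℝ) ^ (-s) := by linarith
  have hBA : B = (1 - ((p:ℕ):ℝ) ^ (-s)) * A := by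
    rw [hAB, show c phat = (1 - ((p:ℕ):ℝ) ^ (-s))⁻¹ from rfl]
    field_simp
  -- complex identification of A
  have hsC : 1 < (s : ℂ).re := by simpa using hs
  have hzC := riemannZeta_eulerProduct_hasProd hsC
  have hAC : HasProd (fun q : Nat.Primes => (1 - ((q:ℕ):ℂ) ^ (-(s:ℂ)))⁻¹) ((A : ℝ) : ℂ) := by
    have hmap := hAc.map Complex.ofRealHom Complex.continuous_ofReal
    have heq : (⇑Complex.ofRealHom ∘ c) = fun q : Nat.Primes => (1 - ((q:ℕ):ℂ) ^ (-(s:ℂ)))⁻¹ := by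
      funext q
      simp only [Function.comp_apply, hc, Complex.ofRealHom_eq_coe, Complex.ofReal_inv,
        Complex.ofReal_sub, Complex.ofReal_one]
      rw [Complex.ofReal_cpow (Nat.cast_nonneg _), Complex.ofReal_neg]
      norm_cast
    rwa [heq] at hmap
  have hAZ : ((A : ℝ) : ℂ) = riemannZeta s := hAC.unique hzC
  -- put everything together
  rw [hzeta, hBA]
  push_cast
  rw [Complex.ofReal_cpow (Nat.cast_nonneg _), Complex.ofReal_neg, hAZ]
  push_cast
  ring

end
end

section
/- Let p be a prime and let 𝒪 := ℤ ×_{𝔽_p} ℤ. Then as real s → 1⁺, the quantity (s−1)² · ζ_𝒪(s) tends to 1 − p^{−1}. -/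
set_option maxHeartbeats 1000000
set_option synthInstance.maxHeartbeats 400000

noncomputable section

open NumberField Filter Topology

namespace ZfpAux

variable (p : ℕ)

/-- The hom `zfp p →+* ZMod n` via the first coordinate. -/
def phi1 (n : ℕ) : (zfp p) →+* ZMod n :=
  (Int.castRingHom (ZMod n)).comp ((RingHom.fst ℤ ℤ).comp (zfp p).subtype)

def phi2 (n : ℕ) : (zfp p) →+* ZMod n :=
  (Int.castRingHom (ZMod n)).comp ((RingHom.snd ℤ ℤ).comp (zfp p).subtype)

lemma phi1_apply (n : ℕ) (x : zfp p) : phi1 p n x = ((x : ℤ × ℤ).1 : ZMod n) := rfl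
lemma phi2_apply (n : ℕ) (x : zfp p) : phi2 p n x = ((x : ℤ × ℤ).2 : ZMod n) := rfl

def diag (a : ℤ) : zfp p := ⟨(a, a), rfl⟩

lemma phi1_surj (n : ℕ) : Function.Surjective (phi1 p n) := fun c => by
  obtain ⟨a, ha⟩ := ZMod.intCast_surjective c
  exact ⟨diag p a, ha⟩

lemma phi2_surj (n : ℕ) : Function.Surjective (phi2 p n) := fun c => by
  obtain ⟨a, ha⟩ := ZMod.intCast_surjective c
  exact ⟨diag p a, ha⟩

variable {q : ℕ}

lemma ker1_isMaximal (hq : q.Prime) : (RingHom.ker (phi1 p q)).IsMaximal := by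
  haveI : Fact q.Prime := ⟨hq⟩
  exact RingHom.ker_isMaximal_of_surjective _ (phi1_surj p q)

lemma ker2_isMaximal (hq : q.Prime) : (RingHom.ker (phi2 p q)).IsMaximal := by
  haveI : Fact q.Prime := ⟨hq⟩
  exact RingHom.ker_isMaximal_of_surjective _ (phi2_surj p q)

lemma card_quot1 (hq : q.Prime) : Nat.card ((zfp p) ⧸ RingHom.ker (phi1 p q)) = q := by
  haveI : Fact q.Prime := ⟨hq⟩
  rw [Nat.card_congr (RingHom.quotientKerEquivOfSurjective (phi1_surj p q)).toEquiv,
    Nat.card_zmod]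

lemma card_quot2 (hq : q.Prime) : Nat.card ((zfp p) ⧸ RingHom.ker (phi2 p q)) = q := by
  haveI : Fact q.Prime := ⟨hq⟩
  rw [Nat.card_congr (RingHom.quotientKerEquivOfSurjective (phi2_surj p q)).toEquiv,
    Nat.card_zmod]

instance : Algebra.IsIntegral (zfp p) (ℤ × ℤ) := by
  constructor
  intro x
  obtain ⟨a, b⟩ := x
  refine ⟨Polynomial.X ^ 2 + Polynomial.C (-(diag p (a + b))) * Polynomial.X
      + Polynomial.C (diag p (a * b)), ?_, ?_⟩
  · rw [add_assoc]
    apply Polynomial.monic_X_pow_add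
    have h : (Polynomial.C (-diag p (a + b)) * Polynomial.X + Polynomial.C (diag p (a * b))).degree ≤ 1 := by
      compute_degree
    refine lt_of_le_of_lt h ?_
    norm_num
  · simp only [Polynomial.eval₂_add, Polynomial.eval₂_mul, Polynomial.eval₂_pow,
      Polynomial.eval₂_X, Polynomial.eval₂_C]
    have h1 : (algebraMap (zfp p) (ℤ × ℤ)) (-(diag p (a+b))) = (-(a+b), -(a+b)) := rfl
    have h2 : (algebraMap (zfp p) (ℤ × ℤ)) (diag p (a*b)) = (a*b, a*b) := rfl
    rw [h1, h2]
    ext <;> simp <;> ring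




variable (p : ℕ)

lemma memProd {R S : Type*} [Semiring R] [Semiring S] {I : Ideal R} {J : Ideal S} {x : R × S} :
    x ∈ Ideal.prod I J ↔ x.1 ∈ I ∧ x.2 ∈ J := Iff.rfl

lemma mem_zfp (x : ℤ × ℤ) : x ∈ zfp p ↔ (x.1 : ZMod p) = (x.2 : ZMod p) := Iff.rfl

lemma ker_eq_at_p : RingHom.ker (phi1 p p) = RingHom.ker (phi2 p p) := by
  ext x
  simp only [RingHom.mem_ker, phi1_apply, phi2_apply]
  have hx : ((x : ℤ × ℤ).1 : ZMod p) = ((x : ℤ × ℤ).2 : ZMod p) := x.property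
  rw [hx]

lemma pzero_mem (hp : p ≠ 0) : ((p : ℤ), (0 : ℤ)) ∈ zfp p := by
  rw [mem_zfp]; push_cast; simp

lemma zerop_mem (hp : p ≠ 0) : ((0 : ℤ), (p : ℤ)) ∈ zfp p := by
  rw [mem_zfp]; push_cast; simp

lemma diag_mem_ker1 (q : ℕ) : diag p q ∈ RingHom.ker (phi1 p q) := by
  simp [RingHom.mem_ker, phi1_apply, diag]

lemma diag_mem_ker2 (q : ℕ) : diag p q ∈ RingHom.ker (phi2 p q) := by
  simp [RingHom.mem_ker, phi2_apply, diag]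

lemma ker1_inj {q q' : ℕ} (hq : q.Prime) (hq' : q'.Prime)
    (h : RingHom.ker (phi1 p q) = RingHom.ker (phi1 p q')) : q = q' := by
  have := diag_mem_ker1 p q
  rw [h, RingHom.mem_ker, phi1_apply] at this
  have hd : (q' : ℤ) ∣ (q : ℤ) := by
    rwa [ZMod.intCast_zmod_eq_zero_iff_dvd] at this
  exact ((Nat.prime_dvd_prime_iff_eq hq' hq).mp (Int.ofNat_dvd.mp hd)).symm

lemma ker2_inj {q q' : ℕ} (hq : q.Prime) (hq' : q'.Prime)
    (h : RingHom.ker (phi2 p q) = RingHom.ker (phi2 p q')) : q = q' := by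
  have := diag_mem_ker2 p q
  rw [h, RingHom.mem_ker, phi2_apply] at this
  have hd : (q' : ℤ) ∣ (q : ℤ) := by
    rwa [ZMod.intCast_zmod_eq_zero_iff_dvd] at this
  exact ((Nat.prime_dvd_prime_iff_eq hq' hq).mp (Int.ofNat_dvd.mp hd)).symm

lemma ker1_ne_ker2 (hp : p.Prime) {q q' : ℕ} (hq : q.Prime) (hq' : q'.Prime) (hne : q' ≠ p) :
    RingHom.ker (phi1 p q) ≠ RingHom.ker (phi2 p q') := by
  intro h
  have hdq : q' = q := by
    have := diag_mem_ker1 p q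
    rw [h, RingHom.mem_ker, phi2_apply] at this
    rw [ZMod.intCast_zmod_eq_zero_iff_dvd] at this
    exact (Nat.prime_dvd_prime_iff_eq hq' hq).mp (Int.ofNat_dvd.mp this)
  subst hdq
  have hx : (⟨(0, (p:ℤ)), zerop_mem p hp.ne_zero⟩ : zfp p) ∈ RingHom.ker (phi1 p q') := by
    simp [RingHom.mem_ker, phi1_apply]
  rw [h, RingHom.mem_ker, phi2_apply] at hx
  rw [ZMod.intCast_zmod_eq_zero_iff_dvd] at hx
  exact hne ((Nat.prime_dvd_prime_iff_eq hq' hp).mp (Int.ofNat_dvd.mp hx))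

lemma classify (hp : p.Prime) (P : Ideal (zfp p)) (hP : P.IsMaximal) :
    (∃ q : Nat.Primes, P = RingHom.ker (phi1 p q)) ∨
      (∃ q : Nat.Primes, (q : ℕ) ≠ p ∧ P = RingHom.ker (phi2 p q)) := by
  haveI := hP.isPrime
  obtain ⟨Q, -, hQprime, hQcomap⟩ := Ideal.exists_ideal_over_prime_of_isIntegral P (⊥ : Ideal (ℤ × ℤ)) (by
    rw [← RingHom.ker_eq_comap_bot,
      (RingHom.injective_iff_ker_eq_bot _).mp Subtype.val_injective]
    exact bot_le)
  rcases (Ideal.ideal_prod_prime Q).mp hQprime with ⟨P', hP', rfl⟩ | ⟨P', hP', rfl⟩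
  · by_cases h0 : P' = ⊥
    · subst h0
      exfalso
      have hle : P ≤ RingHom.ker (phi1 p p) := by
        intro x hx
        rw [← hQcomap] at hx
        have : (x : ℤ × ℤ).1 ∈ (⊥ : Ideal ℤ) := (memProd.mp hx).1
        rw [Ideal.mem_bot] at this
        simp [RingHom.mem_ker, phi1_apply, this]
      have hPeq : P = RingHom.ker (phi1 p p) :=
        (hP.eq_of_le (ker1_isMaximal p hp).ne_top hle)
      have : (⟨((p:ℤ), 0), pzero_mem p hp.ne_zero⟩ : zfp p) ∈ P := by
        rw [hPeq]; simp [RingHom.mem_ker, phi1_apply]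
      rw [← hQcomap] at this
      have h2 : ((p:ℤ)) ∈ (⊥ : Ideal ℤ) := (memProd.mp this).1
      rw [Ideal.mem_bot] at h2
      exact_mod_cast hp.ne_zero (by exact_mod_cast h2)
    · obtain ⟨g, hg⟩ := (IsPrincipalIdealRing.principal P').principal
      rw [Ideal.submodule_span_eq] at hg
      have hg0 : g ≠ 0 := by rintro rfl; exact h0 (by rw [hg, Set.singleton_zero, Ideal.span_zero])
      have hgp : Prime g := by
        rw [hg] at hP'
        exact (Ideal.span_singleton_prime hg0).mp hP'
      have hqn : (g.natAbs).Prime := Int.prime_iff_natAbs_prime.mp hgp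
      left
      refine ⟨⟨g.natAbs, hqn⟩, ?_⟩
      rw [← hQcomap]
      ext x
      simp only [Ideal.mem_comap, RingHom.mem_ker, phi1_apply]
      rw [ZMod.intCast_zmod_eq_zero_iff_dvd]
      constructor
      · intro hx
        have := (memProd.mp hx).1
        rw [hg, Ideal.mem_span_singleton] at this
        exact (Int.natAbs_dvd.mpr this)
      · intro hx
        rw [memProd]
        refine ⟨?_, trivial⟩
        rw [hg, Ideal.mem_span_singleton]
        exact Int.natAbs_dvd.mp hx
  · by_cases h0 : P' = ⊥
    · subst h0
      exfalso
      have hle : P ≤ RingHom.ker (phi2 p p) := by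
        intro x hx
        rw [← hQcomap] at hx
        have : (x : ℤ × ℤ).2 ∈ (⊥ : Ideal ℤ) := (memProd.mp hx).2
        rw [Ideal.mem_bot] at this
        simp [RingHom.mem_ker, phi2_apply, this]
      have hPeq : P = RingHom.ker (phi2 p p) :=
        (hP.eq_of_le (ker2_isMaximal p hp).ne_top hle)
      have : (⟨(0, (p:ℤ)), zerop_mem p hp.ne_zero⟩ : zfp p) ∈ P := by
        rw [hPeq]; simp [RingHom.mem_ker, phi2_apply]
      rw [← hQcomap] at this
      have h2 : ((p:ℤ)) ∈ (⊥ : Ideal ℤ) := (memProd.mp this).2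
      rw [Ideal.mem_bot] at h2
      exact_mod_cast hp.ne_zero (by exact_mod_cast h2)
    · obtain ⟨g, hg⟩ := (IsPrincipalIdealRing.principal P').principal
      rw [Ideal.submodule_span_eq] at hg
      have hg0 : g ≠ 0 := by rintro rfl; exact h0 (by rw [hg, Set.singleton_zero, Ideal.span_zero])
      have hgp : Prime g := by
        rw [hg] at hP'
        exact (Ideal.span_singleton_prime hg0).mp hP'
      have hqn : (g.natAbs).Prime := Int.prime_iff_natAbs_prime.mp hgp
      have hkey : P = RingHom.ker (phi2 p g.natAbs) := by
        rw [← hQcomap]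
        ext x
        simp only [Ideal.mem_comap, RingHom.mem_ker, phi2_apply]
        rw [ZMod.intCast_zmod_eq_zero_iff_dvd]
        constructor
        · intro hx
          have := (memProd.mp hx).2
          rw [hg, Ideal.mem_span_singleton] at this
          exact (Int.natAbs_dvd.mpr this)
        · intro hx
          rw [memProd]
          refine ⟨trivial, ?_⟩
          rw [hg, Ideal.mem_span_singleton]
          exact Int.natAbs_dvd.mp hx
      by_cases hqp : g.natAbs = p
      · left
        exact ⟨⟨p, hp⟩, by rw [hkey, hqp, ker_eq_at_p]⟩
      · right
        exact ⟨⟨g.natAbs, hqn⟩, hqp, hkey⟩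




def fms (s : ℝ) (hs : 1 < s) : ℕ →*₀ ℝ where
  toFun n := (n : ℝ) ^ (-s)
  map_zero' := by
    show ((0 : ℕ) : ℝ) ^ (-s) = 0
    rw [Nat.cast_zero, Real.zero_rpow (neg_ne_zero.mpr (by linarith))]
  map_one' := by
    show ((1 : ℕ) : ℝ) ^ (-s) = 1
    rw [Nat.cast_one, Real.one_rpow]
  map_mul' m n := by
    show ((m * n : ℕ) : ℝ) ^ (-s) = ((m : ℕ) : ℝ) ^ (-s) * ((n : ℕ) : ℝ) ^ (-s)
    rw [Nat.cast_mul, Real.mul_rpow (Nat.cast_nonneg m) (Nat.cast_nonneg n)]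

/-- `fms` with the prime `p` killed. -/
def fmsp (p : ℕ) (hp : p.Prime) (s : ℝ) (hs : 1 < s) : ℕ →*₀ ℝ where
  toFun n := if p ∣ n then 0 else (n : ℝ) ^ (-s)
  map_zero' := by simp
  map_one' := by
    show (if p ∣ 1 then (0:ℝ) else ((1 : ℕ) : ℝ) ^ (-s)) = 1
    rw [if_neg hp.not_dvd_one, Nat.cast_one, Real.one_rpow]
  map_mul' m n := by
    show (if p ∣ m * n then (0:ℝ) else ((m * n : ℕ) : ℝ) ^ (-s))
      = (if p ∣ m then (0:ℝ) else ((m : ℕ) : ℝ) ^ (-s))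
        * (if p ∣ n then (0:ℝ) else ((n : ℕ) : ℝ) ^ (-s))
    by_cases hm : p ∣ m
    · simp [hm, (hp.dvd_mul).mpr (Or.inl hm)]
    · by_cases hn : p ∣ n
      · simp [hn, (hp.dvd_mul).mpr (Or.inr hn)]
      · have : ¬ p ∣ m * n := fun hc => by rcases hp.dvd_mul.mp hc with h | h <;> tauto
        rw [if_neg this, if_neg hm, if_neg hn, Nat.cast_mul,
          Real.mul_rpow (Nat.cast_nonneg m) (Nat.cast_nonneg n)]

lemma fms_summable {s : ℝ} (hs : 1 < s) : Summable (fun n => ‖fms s hs n‖) := by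
  refine (Real.summable_nat_rpow.mpr (by linarith : -s < -1)).congr fun n => ?_
  exact (Real.norm_of_nonneg (Real.rpow_nonneg (Nat.cast_nonneg n) _)).symm

lemma fmsp_summable {p : ℕ} (hp : p.Prime) {s : ℝ} (hs : 1 < s) :
    Summable (fun n => ‖fmsp p hp s hs n‖) := by
  refine Summable.of_nonneg_of_le (fun n => norm_nonneg _) (fun n => ?_)
    (Real.summable_nat_rpow.mpr (by linarith : -s < -1))
  show ‖if p ∣ n then (0:ℝ) else (n : ℝ) ^ (-s)‖ ≤ (n : ℝ) ^ (-s)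
  split
  · simpa using Real.rpow_nonneg (Nat.cast_nonneg n) _
  · rw [Real.norm_of_nonneg (Real.rpow_nonneg (Nat.cast_nonneg n) _)]

lemma euler1 {s : ℝ} (hs : 1 < s) :
    HasProd (fun q : Nat.Primes => (1 - ((q : ℕ) : ℝ) ^ (-s))⁻¹) (∑' n : ℕ, (n : ℝ) ^ (-s)) :=
  EulerProduct.eulerProduct_completely_multiplicative_hasProd (fms_summable hs)

lemma tsum_fmsp {p : ℕ} (hp : p.Prime) {s : ℝ} (hs : 1 < s) :
    ∑' n : ℕ, fmsp p hp s hs n = (∑' n : ℕ, (n : ℝ) ^ (-s)) * (1 - (p : ℝ) ^ (-s)) := by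
  have hZ : Summable (fun n : ℕ => (n : ℝ) ^ (-s)) :=
    Real.summable_nat_rpow.mpr (by linarith : -s < -1)
  set h : ℕ → ℝ := fun n => if p ∣ n then (n : ℝ) ^ (-s) else 0 with hh
  have hhs : Summable h := by
    refine Summable.of_nonneg_of_le (fun n => ?_) (fun n => ?_) hZ
    · show (0:ℝ) ≤ if p ∣ n then (n : ℝ) ^ (-s) else 0
      split
      · exact Real.rpow_nonneg (Nat.cast_nonneg n) _
      · exact le_refl 0
    · show (if p ∣ n then (n : ℝ) ^ (-s) else 0) ≤ (n : ℝ) ^ (-s)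
      split
      · exact le_refl _
      · exact Real.rpow_nonneg (Nat.cast_nonneg n) _
  have hinj : Function.Injective (fun m : ℕ => p * m) :=
    fun a b hab => by
      have := hp.pos
      exact Nat.eq_of_mul_eq_mul_left this hab
  have hsupp : Function.support h ⊆ Set.range (fun m : ℕ => p * m) := by
    intro n hn
    rw [Function.mem_support, hh] at hn
    by_cases hd : p ∣ n
    · obtain ⟨m, rfl⟩ := hd; exact ⟨m, rfl⟩
    · simp [hd] at hn
  have hcomp : ∀ m : ℕ, h (p * m) = (p : ℝ) ^ (-s) * (m : ℝ) ^ (-s) := by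
    intro m
    rw [hh]
    simp only [dvd_mul_right, if_pos]
    rw [Nat.cast_mul, Real.mul_rpow (Nat.cast_nonneg p) (Nat.cast_nonneg m)]
  have key : ∑' n, h n = (p : ℝ) ^ (-s) * ∑' n : ℕ, (n : ℝ) ^ (-s) := by
    rw [← hinj.tsum_eq hsupp]
    simp only [hcomp]
    exact tsum_mul_left
  have hsplit : ∀ n : ℕ, fmsp p hp s hs n = (n : ℝ) ^ (-s) - h n := by
    intro n
    show (if p ∣ n then (0:ℝ) else (n : ℝ) ^ (-s))
      = (n : ℝ) ^ (-s) - if p ∣ n then (n : ℝ) ^ (-s) else 0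
    split <;> ring
  calc ∑' n : ℕ, fmsp p hp s hs n = ∑' n : ℕ, ((n : ℝ) ^ (-s) - h n) := by
        exact tsum_congr hsplit
    _ = (∑' n : ℕ, (n : ℝ) ^ (-s)) - ∑' n, h n := hZ.tsum_sub hhs
    _ = _ := by rw [key]; ring

lemma euler2 {p : ℕ} (hp : p.Prime) {s : ℝ} (hs : 1 < s) :
    HasProd (fun q : Nat.Primes => (1 - fmsp p hp s hs (q : ℕ))⁻¹)
      ((∑' n : ℕ, (n : ℝ) ^ (-s)) * (1 - (p : ℝ) ^ (-s))) := by
  have := EulerProduct.eulerProduct_completely_multiplicative_hasProd (fmsp_summable hp hs)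
  rwa [tsum_fmsp hp hs] at this

lemma hasProd_compl {p : ℕ} (hp : p.Prime) {s : ℝ} (hs : 1 < s) :
    HasProd ((fun q : Nat.Primes => (1 - ((q : ℕ) : ℝ) ^ (-s))⁻¹) ∘ (↑) :
      (({⟨p, hp⟩} : Set Nat.Primes)ᶜ : Set Nat.Primes) → ℝ)
      ((∑' n : ℕ, (n : ℝ) ^ (-s)) * (1 - (p : ℝ) ^ (-s))) := by
  set h : Nat.Primes → ℝ := fun q => (1 - fmsp p hp s hs (q : ℕ))⁻¹ with hhdef
  have hsupp : Function.mulSupport h ⊆ (({⟨p, hp⟩} : Set Nat.Primes)ᶜ : Set Nat.Primes) := by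
    intro q hq
    simp only [Set.mem_compl_iff, Set.mem_singleton_iff]
    rintro rfl
    apply hq
    show (1 - fmsp p hp s hs p)⁻¹ = 1
    have : fmsp p hp s hs p = 0 := by
      show (if p ∣ p then (0:ℝ) else _) = 0
      rw [if_pos dvd_rfl]
    rw [this]; norm_num
  have h2 := (hasProd_subtype_iff_of_mulSupport_subset hsupp).mpr (euler2 hp hs)
  have heq : (h ∘ (↑) : (({⟨p, hp⟩} : Set Nat.Primes)ᶜ : Set Nat.Primes) → ℝ)
      = ((fun q : Nat.Primes => (1 - ((q : ℕ) : ℝ) ^ (-s))⁻¹) ∘ (↑)) := by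
    funext q
    have hq : ¬ p ∣ (q.1 : ℕ) := by
      intro hd
      have : p = (q.1 : ℕ) := (Nat.prime_dvd_prime_iff_eq hp q.1.2).mp hd
      exact q.2 (Subtype.ext this.symm)
    show (1 - fmsp p hp s hs (q.1 : ℕ))⁻¹ = (1 - ((q.1 : ℕ) : ℝ) ^ (-s))⁻¹
    have : fmsp p hp s hs (q.1 : ℕ) = ((q.1 : ℕ) : ℝ) ^ (-s) := by
      show (if p ∣ (q.1 : ℕ) then (0:ℝ) else ((q.1 : ℕ) : ℝ) ^ (-s)) = _
      rw [if_neg hq]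
    rw [this]
  rwa [heq] at h2



lemma zeta_eq (p : ℕ) (hp : p.Prime) {s : ℝ} (hs : 1 < s) :
    zetaOrder ↥(zfp p) s = (∑' n : ℕ, (n : ℝ) ^ (-s)) ^ 2 * (1 - (p : ℝ) ^ (-s)) := by
  classical
  set F : MaximalSpectrum (zfp p) → ℝ :=
    fun 𝔭 => (1 - (Nat.card ((zfp p) ⧸ 𝔭.asIdeal) : ℝ) ^ (-s))⁻¹ with hF
  set M₁ : Nat.Primes → MaximalSpectrum (zfp p) :=
    fun q => ⟨RingHom.ker (phi1 p q), ker1_isMaximal p q.2⟩ with hM₁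
  set M₂ : (({⟨p, hp⟩} : Set Nat.Primes)ᶜ : Set Nat.Primes) → MaximalSpectrum (zfp p) :=
    fun q => ⟨RingHom.ker (phi2 p q.1), ker2_isMaximal p q.1.2⟩ with hM₂
  have hM₁inj : Function.Injective M₁ := fun q q' h =>
    Subtype.ext (ker1_inj p q.2 q'.2 (congrArg MaximalSpectrum.asIdeal h))
  have hM₂inj : Function.Injective M₂ := fun q q' h =>
    Subtype.ext (Subtype.ext (ker2_inj p q.1.2 q'.1.2 (congrArg MaximalSpectrum.asIdeal h)))
  have hrange : Set.range M₂ = (Set.range M₁)ᶜ := by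
    ext x
    constructor
    · rintro ⟨q, rfl⟩ ⟨q', hq'⟩
      exact ker1_ne_ker2 p hp q'.2 q.1.2 (fun hc => q.2 (Subtype.ext hc))
        (congrArg MaximalSpectrum.asIdeal hq')
    · intro hx
      rcases classify p hp x.asIdeal x.isMaximal with ⟨q, hq⟩ | ⟨q, hqp, hq⟩
      · exact absurd ⟨q, MaximalSpectrum.ext hq.symm⟩ hx
      · exact ⟨⟨q, fun hc => hqp (congrArg (fun t : Nat.Primes => (t : ℕ)) hc)⟩,
          MaximalSpectrum.ext hq.symm⟩
  have h1 : HasProd (F ∘ (↑) : Set.range M₁ → ℝ) (∑' n : ℕ, (n : ℝ) ^ (-s)) := by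
    rw [← (Equiv.ofInjective M₁ hM₁inj).hasProd_iff]
    have hfun : ((F ∘ (↑)) ∘ (Equiv.ofInjective M₁ hM₁inj))
        = fun q : Nat.Primes => (1 - ((q : ℕ) : ℝ) ^ (-s))⁻¹ := by
      funext q
      show F (M₁ q) = _
      rw [hF]
      simp only [hM₁]
      rw [card_quot1 p q.2]
    rw [hfun]
    exact euler1 hs
  have h2 : HasProd (F ∘ (↑) : ((Set.range M₁)ᶜ : Set (MaximalSpectrum (zfp p))) → ℝ)
      ((∑' n : ℕ, (n : ℝ) ^ (-s)) * (1 - (p : ℝ) ^ (-s))) := by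
    rw [← hrange, ← (Equiv.ofInjective M₂ hM₂inj).hasProd_iff]
    have hfun : ((F ∘ (↑)) ∘ (Equiv.ofInjective M₂ hM₂inj))
        = ((fun q : Nat.Primes => (1 - ((q : ℕ) : ℝ) ^ (-s))⁻¹) ∘ (↑)) := by
      funext q
      show F (M₂ q) = _
      rw [hF]
      simp only [hM₂]
      rw [card_quot2 p q.1.2]
      rfl
    rw [hfun]
    exact hasProd_compl hp hs
  have htot := h1.mul_compl h2
  have : zetaOrder ↥(zfp p) s = (∑' n : ℕ, (n : ℝ) ^ (-s))
      * ((∑' n : ℕ, (n : ℝ) ^ (-s)) * (1 - (p : ℝ) ^ (-s))) := htot.tprod_eq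
  rw [this]
  ring

end ZfpAux

/-- For `𝒪 = ℤ ×_{𝔽_p} ℤ`, as real `s → 1⁺`, `(s-1)² ζ_𝒪(s) → 1 - p⁻¹`. -/
theorem stmt14 (p : ℕ) (hp : p.Prime) :
    Filter.Tendsto (fun s : ℝ => (s - 1) ^ 2 * zetaOrder ↥(zfp p) s)
      (nhdsWithin 1 (Set.Ioi 1)) (nhds (1 - (p : ℝ)⁻¹)) := by
  have hcongr : ∀ᶠ s in 𝓝[>] (1:ℝ), ((s - 1) * ∑' n : ℕ, 1 / (n : ℝ) ^ s) ^ 2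
      * (1 - (p : ℝ) ^ (-s)) = (s - 1) ^ 2 * zetaOrder ↥(zfp p) s := by
    filter_upwards [self_mem_nhdsWithin] with s hs
    rw [ZfpAux.zeta_eq p hp hs]
    have hn : ∀ n : ℕ, (n : ℝ) ^ (-s) = 1 / (n : ℝ) ^ s := fun n => by
      rw [Real.rpow_neg (Nat.cast_nonneg n), one_div]
    rw [tsum_congr hn]
    ring
  refine Tendsto.congr' hcongr ?_
  have hsq : Tendsto (fun s : ℝ => ((s - 1) * ∑' n : ℕ, 1 / (n : ℝ) ^ s) ^ 2)
      (𝓝[>] (1:ℝ)) (𝓝 1) := by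
    have := tendsto_sub_mul_tsum_nat_rpow.pow 2
    simpa using this
  have hp2 : Tendsto (fun s : ℝ => 1 - (p : ℝ) ^ (-s)) (𝓝[>] (1:ℝ)) (𝓝 (1 - (p : ℝ)⁻¹)) := by
    have hpp : (0:ℝ) < p := by exact_mod_cast hp.pos
    have hcont : Continuous (fun s : ℝ => 1 - (p : ℝ) ^ (-s)) := by
      have : (fun s : ℝ => (p : ℝ) ^ (-s)) = fun s : ℝ => Real.exp (Real.log p * (-s)) := by
        funext s
        rw [Real.rpow_def_of_pos hpp]
      rw [show (fun s : ℝ => 1 - (p : ℝ) ^ (-s))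
          = fun s : ℝ => 1 - Real.exp (Real.log p * (-s)) by
        funext s; rw [Real.rpow_def_of_pos hpp]]
      fun_prop
    have := (hcont.continuousAt (x := (1:ℝ))).tendsto.mono_left (nhdsWithin_le_nhds (s := Set.Ioi (1:ℝ)))
    simpa [Real.rpow_neg_one] using this
  simpa using hsq.mul hp2

end
end
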